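/- Let Φ be a completely positive linear map between matrix algebras. For 0 ≤ α ≤ 1 and positive definite A, B with Φ(A), Φ(B) positive definite, Φ(G_α(A,B)) ≤ G_α(Φ(A), Φ(B)), where G_α(A,B) = B^{1/2}(B^{-1/2} A B^{-1/2})^α B^{1/2} is the weighted geometric mean. -/

import Mathlib

open Matrix
open scoped ComplexOrder Classical

/-- Square root of a positive semidefinite matrix, extended by `0`. -/
noncomputable def msqrt {n : Type*} [Fintype n] [DecidableEq n] (A : Matrix n n ℂ) :
    Matrix n n ℂ :=
  if h : A.PosSemidef then (h.1.eigenvectorUnitary : Matrix n n ℂ) *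
    diagonal (((↑) : ℝ → ℂ) ∘ Real.sqrt ∘ h.1.eigenvalues) *
    (star h.1.eigenvectorUnitary : Matrix n n ℂ) else 0

/-- Real power of a Hermitian matrix via the functional calculus, extended by `0`. -/
noncomputable def mrpow {n : Type*} [Fintype n] [DecidableEq n] (A : Matrix n n ℂ) (α : ℝ) :
    Matrix n n ℂ :=
  if h : A.IsHermitian then h.cfc (fun t => t ^ α) else 0

/-- A completely positive linear map between matrix algebras (Choi–Kraus form). -/
def IsCPMap {n m : Type*} [Fintype n] [Fintype m] (Φ : Matrix n n ℂ → Matrix m m ℂ) : Prop :=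
  ∃ (r : ℕ) (C : Fin r → Matrix n m ℂ), ∀ X, Φ X = ∑ i, (C i)ᴴ * X * C i

/-- The matrix geometric mean `A^{1/2} (A^{-1/2} B A^{-1/2})^{1/2} A^{1/2}`. -/
noncomputable def geomMean {n : Type*} [Fintype n] [DecidableEq n] (A B : Matrix n n ℂ) :
    Matrix n n ℂ :=
  msqrt A * msqrt ((msqrt A)⁻¹ * B * (msqrt A)⁻¹) * msqrt A

/-- The weighted geometric mean `B^{1/2} (B^{-1/2} A B^{-1/2})^α B^{1/2}`. -/
noncomputable def wgeomMean {n : Type*} [Fintype n] [DecidableEq n] (α : ℝ)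
    (A B : Matrix n n ℂ) : Matrix n n ℂ :=
  msqrt B * mrpow ((msqrt B)⁻¹ * A * (msqrt B)⁻¹) α * msqrt B

/-- The harmonic mean `2 (A⁻¹ + B⁻¹)⁻¹`. -/
noncomputable def harmMean {n : Type*} [Fintype n] [DecidableEq n] (A B : Matrix n n ℂ) :
    Matrix n n ℂ :=
  (2 : ℂ) • (A⁻¹ + B⁻¹)⁻¹

/-!
Ando's argument. Call `t` good if `Φ (G_t(A, B)) ≤ G_t(Φ A, Φ B)`. The exponents `0` and `1`
are good trivially, and the good exponents form a closed set since `t ↦ G_t(A, B)` is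
continuous. Midpoints of good exponents are good: `G_{(s+t)/2}(A, B) = G_s(A, B) # G_t(A, B)`
for the unweighted mean `#`, which is monotone and satisfies `Φ (X # Y) ≤ Φ X # Φ Y`, because
`X # Y` is the largest Hermitian `Z` with `[[X, Z], [Z, Y]] ≥ 0` and `Φ` preserves the
positivity of such block matrices. Hence all dyadic rationals in `[0, 1]` are good, and then
all of `[0, 1]`.
-/

theorem CFC.le_sqrt_of_mul_self_le {A : Type*} [CStarAlgebra A] [PartialOrder A]
    [StarOrderedRing A] {a b : A} (ha : IsSelfAdjoint a) (h : a * a ≤ b) : a ≤ CFC.sqrt b :=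
  calc a ≤ CFC.abs a := by
        rw [← sub_nonneg, CFC.abs_sub_self a ha]
        exact smul_nonneg zero_le_two (CFC.negPart_nonneg a)
    _ = CFC.sqrt (a * a) := by rw [CFC.abs, ha.star_eq]
    _ ≤ CFC.sqrt b := CFC.sqrt_le_sqrt _ _ h

theorem Set.Icc_subset_of_isClosed_of_midpoint_mem {S : Set ℝ} (hS : IsClosed S) (h0 : 0 ∈ S)
    (h1 : 1 ∈ S) (hmid : ∀ x ∈ S, ∀ y ∈ S, (x + y) / 2 ∈ S) : Icc 0 1 ⊆ S := by
  have hdyadic : ∀ j k : ℕ, k ≤ 2 ^ j → (k : ℝ) / 2 ^ j ∈ S := by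
    intro j
    induction j with
    | zero =>
      intro k hk
      interval_cases k <;> simpa
    | succ j ih =>
      intro k hk
      obtain ⟨t, rfl | rfl⟩ := Nat.even_or_odd' k
      · convert ih t (by omega) using 1
        push_cast; field_simp; ring
      · convert hmid _ (ih t (by omega)) _ (ih (t + 1) (by omega)) using 1
        push_cast; field_simp; ring
  intro α ⟨hα0, hα1⟩
  have htend : Filter.Tendsto (fun j : ℕ => (⌊α * 2 ^ j⌋₊ : ℝ) / 2 ^ j) Filter.atTop (nhds α) :=
    (tendsto_nat_floor_mul_div_atTop hα0).comp
      (tendsto_pow_atTop_atTop_of_one_lt one_lt_two)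
  refine hS.mem_of_tendsto htend (Filter.Eventually.of_forall fun j => hdyadic j _ ?_)
  exact Nat.floor_le_of_le (by push_cast; nlinarith [pow_pos (two_pos (α := ℝ)) j])

namespace Matrix

open scoped MatrixOrder

variable {n : Type*} [Fintype n] [DecidableEq n] {A B X : Matrix n n ℂ}

theorem msqrt_eq_sqrt (hA : A.PosSemidef) : msqrt A = CFC.sqrt A := by
  rw [msqrt, dif_pos hA, CFC.sqrt_eq_real_sqrt A hA.nonneg, cfcₙ_eq_cfc (hf0 := Real.sqrt_zero),
    hA.1.cfc_eq]
  rfl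

theorem mrpow_eq_rpow (hA : A.PosSemidef) (α : ℝ) : mrpow A α = A ^ α := by
  rw [mrpow, dif_pos hA.1, CFC.rpow_eq_cfc_real hA.nonneg, hA.1.cfc_eq]

theorem PosDef.sqrt (hA : A.PosDef) : (CFC.sqrt A).PosDef :=
  (IsStrictlyPositive.sqrt A hA.isStrictlyPositive).posDef

theorem PosDef.rpow (hA : A.PosDef) (α : ℝ) : (A ^ α).PosDef :=
  (IsStrictlyPositive.rpow A α hA.isStrictlyPositive).posDef

theorem conj_inv_conj_cancel {S : Matrix n n ℂ} (hS : IsUnit S) (X : Matrix n n ℂ) :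
    S * (S⁻¹ * X * S⁻¹) * S = X := by
  have hdet := (isUnit_iff_isUnit_det S).mp hS
  simp only [Matrix.mul_assoc, nonsing_inv_mul _ hdet, mul_one,
    mul_nonsing_inv_cancel_left _ _ hdet]

theorem PosDef.inv_sqrt_mul_inv_sqrt (hA : A.PosDef) :
    (CFC.sqrt A)⁻¹ * (CFC.sqrt A)⁻¹ = A⁻¹ := by
  rw [← Matrix.mul_inv_rev, CFC.sqrt_mul_sqrt_self A hA.posSemidef.nonneg]

theorem geomMean_eq_of_mul_inv_mul_eq (hA : A.PosDef) (hX : X.PosSemidef)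
    (h : X * A⁻¹ * X = B) : geomMean A B = X := by
  have hS : (CFC.sqrt A).PosDef := hA.sqrt
  have hAinv := hA.inv_sqrt_mul_inv_sqrt
  set S := CFC.sqrt A
  have hY : (S⁻¹ * X * S⁻¹).PosSemidef := by
    simpa only [hS.inv.1.eq] using hX.mul_mul_conjTranspose_same S⁻¹
  have hYY : S⁻¹ * B * S⁻¹ = (S⁻¹ * X * S⁻¹) * (S⁻¹ * X * S⁻¹) := by
    rw [← h, ← hAinv]
    simp only [Matrix.mul_assoc]
  have hsq : CFC.sqrt (S⁻¹ * B * S⁻¹) = S⁻¹ * X * S⁻¹ :=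
    CFC.sqrt_unique hYY.symm hY.nonneg
  have hB' : (S⁻¹ * B * S⁻¹).PosSemidef := by
    rw [hYY]
    simpa only [hY.1.eq] using posSemidef_conjTranspose_mul_self (S⁻¹ * X * S⁻¹)
  rw [geomMean, msqrt_eq_sqrt hA.posSemidef, msqrt_eq_sqrt hB', hsq,
    conj_inv_conj_cancel hS.isUnit]

theorem PosDef.conj_of_isHermitian {U : Matrix n n ℂ} (hX : X.PosDef) (hU : IsUnit U)
    (hUh : U.IsHermitian) : (U * X * U).PosDef := by
  simpa only [star_eq_conjTranspose, hUh.eq] using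
    (Matrix.IsUnit.posDef_star_right_conjugate_iff hU).mpr hX

theorem PosDef.conj_inv_sqrt (hX : X.PosDef) (hA : A.PosDef) :
    ((CFC.sqrt A)⁻¹ * X * (CFC.sqrt A)⁻¹).PosDef :=
  hX.conj_of_isHermitian hA.sqrt.inv.isUnit hA.sqrt.inv.1

theorem PosSemidef.conj_inv_sqrt (hX : X.PosSemidef) (hA : A.PosDef) :
    ((CFC.sqrt A)⁻¹ * X * (CFC.sqrt A)⁻¹).PosSemidef := by
  simpa only [hA.sqrt.inv.1.eq] using hX.mul_mul_conjTranspose_same (CFC.sqrt A)⁻¹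

theorem geomMean_eq_sqrt (hA : A.PosDef) (hB : B.PosSemidef) :
    geomMean A B =
      CFC.sqrt A * CFC.sqrt ((CFC.sqrt A)⁻¹ * B * (CFC.sqrt A)⁻¹) * CFC.sqrt A := by
  rw [geomMean, msqrt_eq_sqrt hA.posSemidef, msqrt_eq_sqrt (hB.conj_inv_sqrt hA)]

theorem PosDef.geomMean (hA : A.PosDef) (hB : B.PosDef) : (geomMean A B).PosDef := by
  rw [geomMean_eq_sqrt hA hB.posSemidef]
  exact (hB.conj_inv_sqrt hA).sqrt.conj_of_isHermitian hA.sqrt.isUnit hA.sqrt.1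

theorem geomMean_mul_inv_mul (hA : A.PosDef) (hB : B.PosSemidef) :
    geomMean A B * A⁻¹ * geomMean A B = B := by
  have hS := hA.sqrt
  have hAinv := hA.inv_sqrt_mul_inv_sqrt
  have hT := CFC.sqrt_mul_sqrt_self _ (hB.conj_inv_sqrt hA).nonneg
  rw [geomMean_eq_sqrt hA hB]
  set S := CFC.sqrt A
  set T := CFC.sqrt (S⁻¹ * B * S⁻¹)
  have hdet := (isUnit_iff_isUnit_det S).mp hS.isUnit
  calc S * T * S * A⁻¹ * (S * T * S) = S * (T * T) * S := by
        simp only [← hAinv, Matrix.mul_assoc, mul_nonsing_inv_cancel_left _ _ hdet,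
          nonsing_inv_mul_cancel_left _ _ hdet]
    _ = B := by rw [hT, conj_inv_conj_cancel hS.isUnit]

theorem geomMean_conj (hA : A.PosDef) (hB : B.PosDef) {M : Matrix n n ℂ} (hM : IsUnit M) :
    geomMean (M * A * Mᴴ) (M * B * Mᴴ) = M * geomMean A B * Mᴴ := by
  have hconj : ∀ {X : Matrix n n ℂ}, X.PosDef → (M * X * Mᴴ).PosDef := fun hX =>
    (Matrix.IsUnit.posDef_star_right_conjugate_iff hM).mpr hX
  refine geomMean_eq_of_mul_inv_mul_eq (hconj hA) (hconj (hA.geomMean hB)).posSemidef ?_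
  have hdet := (isUnit_iff_isUnit_det M).mp hM
  have hdetH : IsUnit Mᴴ.det := by rw [det_conjTranspose]; exact hdet.star
  rw [Matrix.mul_inv_rev, Matrix.mul_inv_rev]
  conv_rhs => rw [← geomMean_mul_inv_mul hA hB.posSemidef]
  simp only [Matrix.mul_assoc, mul_nonsing_inv_cancel_left _ _ hdetH,
    nonsing_inv_mul_cancel_left _ _ hdet]

theorem geomMean_rpow_rpow {C : Matrix n n ℂ} (hC : C.PosDef) (β γ : ℝ) :
    geomMean (C ^ β) (C ^ γ) = C ^ ((β + γ) / 2) := by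
  refine geomMean_eq_of_mul_inv_mul_eq (hC.rpow β) (hC.rpow _).posSemidef ?_
  rw [inv_eq_left_inv (CFC.rpow_neg_mul_rpow β hC.isStrictlyPositive), ← CFC.rpow_add hC.isUnit,
    ← CFC.rpow_add hC.isUnit]
  ring_nf

theorem posSemidef_fromBlocks_geomMean (hA : A.PosDef) (hB : B.PosDef) :
    (fromBlocks A (geomMean A B) (geomMean A B) B).PosSemidef := by
  have := hA.isUnit.invertible
  have hG := (hA.geomMean hB).1
  have h := (PosDef.fromBlocks₁₁ (geomMean A B) B hA).mpr
  rw [hG.eq, geomMean_mul_inv_mul hA hB.posSemidef, sub_self] at h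
  exact h PosSemidef.zero

theorem PosSemidef.fromBlocks_diag {m : Type*} [Fintype m] {X : Matrix n n ℂ}
    {Y : Matrix m m ℂ} (hX : X.PosSemidef) (hY : Y.PosSemidef) :
    (fromBlocks X 0 0 Y).PosSemidef := by
  obtain ⟨R, rfl⟩ := CStarAlgebra.nonneg_iff_eq_star_mul_self.mp hX.nonneg
  obtain ⟨R', rfl⟩ := CStarAlgebra.nonneg_iff_eq_star_mul_self.mp hY.nonneg
  convert posSemidef_conjTranspose_mul_self (fromBlocks R 0 0 R') using 1
  simp [fromBlocks_conjTranspose, fromBlocks_multiply, star_eq_conjTranspose]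

open scoped Matrix.Norms.L2Operator in
theorem le_geomMean_of_posSemidef_fromBlocks (hA : A.PosDef) (hB : B.PosDef)
    {Z : Matrix n n ℂ} (hZ : Z.IsHermitian) (h : (fromBlocks A Z Z B).PosSemidef) :
    Z ≤ geomMean A B := by
  have := hA.isUnit.invertible
  have hschur : Z * A⁻¹ * Z ≤ B := by
    rw [le_iff]
    simpa only [hZ.eq] using (PosDef.fromBlocks₁₁ Z B hA).mp (by rwa [hZ.eq])
  have hS := hA.sqrt
  have hAinv := hA.inv_sqrt_mul_inv_sqrt
  rw [geomMean_eq_sqrt hA hB.posSemidef]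
  set S := CFC.sqrt A
  have hSinv : IsSelfAdjoint S⁻¹ := hS.inv.1
  have hW : IsSelfAdjoint (S⁻¹ * Z * S⁻¹) := hZ.isSelfAdjoint.conjugate_self hSinv
  have hWW : (S⁻¹ * Z * S⁻¹) * (S⁻¹ * Z * S⁻¹) ≤ S⁻¹ * B * S⁻¹ := by
    have := hSinv.conjugate_le_conjugate hschur
    rw [← hAinv] at this
    simpa only [Matrix.mul_assoc] using this
  have := hS.1.isSelfAdjoint.conjugate_le_conjugate (CFC.le_sqrt_of_mul_self_le hW hWW)
  rwa [conj_inv_conj_cancel hS.isUnit] at this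

open scoped Matrix.Norms.L2Operator in
theorem geomMean_mono {A₁ A₂ B₁ B₂ : Matrix n n ℂ} (hA₁ : A₁.PosDef) (hB₁ : B₁.PosDef)
    (hA : A₁ ≤ A₂) (hB : B₁ ≤ B₂) : geomMean A₁ B₁ ≤ geomMean A₂ B₂ := by
  have hA₂ := (hA₁.isStrictlyPositive.of_le hA).posDef
  have hB₂ := (hB₁.isStrictlyPositive.of_le hB).posDef
  refine le_geomMean_of_posSemidef_fromBlocks hA₂ hB₂ (hA₁.geomMean hB₁).1 ?_
  have hsplit : fromBlocks A₂ (geomMean A₁ B₁) (geomMean A₁ B₁) B₂ =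
      fromBlocks A₁ (geomMean A₁ B₁) (geomMean A₁ B₁) B₁ +
        fromBlocks (A₂ - A₁) 0 0 (B₂ - B₁) := by
    simp [fromBlocks_add]
  rw [hsplit]
  exact (posSemidef_fromBlocks_geomMean hA₁ hB₁).add (PosSemidef.fromBlocks_diag hA hB)

theorem wgeomMean_eq_sqrt (hA : A.PosSemidef) (hB : B.PosDef) (α : ℝ) :
    wgeomMean α A B =
      CFC.sqrt B * ((CFC.sqrt B)⁻¹ * A * (CFC.sqrt B)⁻¹) ^ α * CFC.sqrt B := by
  rw [wgeomMean, msqrt_eq_sqrt hB.posSemidef, mrpow_eq_rpow (hA.conj_inv_sqrt hB)]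

theorem wgeomMean_zero (hA : A.PosSemidef) (hB : B.PosDef) : wgeomMean 0 A B = B := by
  rw [wgeomMean_eq_sqrt hA hB, CFC.rpow_zero _ (hA.conj_inv_sqrt hB).nonneg, mul_one,
    CFC.sqrt_mul_sqrt_self B hB.posSemidef.nonneg]

theorem wgeomMean_one (hA : A.PosSemidef) (hB : B.PosDef) : wgeomMean 1 A B = A := by
  rw [wgeomMean_eq_sqrt hA hB, CFC.rpow_one _ (hA.conj_inv_sqrt hB).nonneg,
    conj_inv_conj_cancel hB.sqrt.isUnit]

theorem PosDef.wgeomMean (hA : A.PosDef) (hB : B.PosDef) (α : ℝ) :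
    (wgeomMean α A B).PosDef := by
  rw [wgeomMean_eq_sqrt hA.posSemidef hB]
  exact ((hA.conj_inv_sqrt hB).rpow α).conj_of_isHermitian hB.sqrt.isUnit hB.sqrt.1

theorem wgeomMean_midpoint (hA : A.PosDef) (hB : B.PosDef) (β γ : ℝ) :
    wgeomMean ((β + γ) / 2) A B = geomMean (wgeomMean β A B) (wgeomMean γ A B) := by
  have hC := hA.conj_inv_sqrt hB
  have hS := hB.sqrt
  have hconj : ∀ δ, wgeomMean δ A B =
      CFC.sqrt B * ((CFC.sqrt B)⁻¹ * A * (CFC.sqrt B)⁻¹) ^ δ * (CFC.sqrt B)ᴴ := fun δ => by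
    rw [wgeomMean_eq_sqrt hA.posSemidef hB, hS.1.eq]
  rw [hconj, hconj, hconj, geomMean_conj (hC.rpow β) (hC.rpow γ) hS.isUnit,
    geomMean_rpow_rpow hC]

theorem continuous_mrpow {C : Matrix n n ℂ} (hC : C.PosDef) : Continuous (mrpow C) := by
  have hform : mrpow C = fun α => (hC.1.eigenvectorUnitary : Matrix n n ℂ) *
      diagonal (fun i => ((hC.1.eigenvalues i ^ α : ℝ) : ℂ)) *
      (star hC.1.eigenvectorUnitary : Matrix n n ℂ) := by
    ext1 α
    rw [mrpow, dif_pos hC.1, IsHermitian.cfc, Unitary.conjStarAlgAut_apply]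
    rfl
  rw [hform]
  refine (continuous_const.matrix_mul (Continuous.matrix_diagonal ?_)).matrix_mul
    continuous_const
  refine continuous_pi fun i => Complex.continuous_ofReal.comp ?_
  exact continuous_const.rpow continuous_id fun _ => Or.inl (hC.eigenvalues_pos i).ne'

theorem continuous_wgeomMean (hA : A.PosDef) (hB : B.PosDef) :
    Continuous fun α => wgeomMean α A B := by
  have hC : ((msqrt B)⁻¹ * A * (msqrt B)⁻¹).PosDef := by
    rw [msqrt_eq_sqrt hB.posSemidef]
    exact hA.conj_inv_sqrt hB
  exact (continuous_const.matrix_mul (continuous_mrpow hC)).matrix_mul continuous_const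

open scoped Matrix.Norms.L2Operator in
theorem isClosed_setOf_posSemidef : IsClosed {A : Matrix n n ℂ | A.PosSemidef} := by
  simpa only [nonneg_iff_posSemidef] using CStarAlgebra.isClosed_nonneg (A := Matrix n n ℂ)

end Matrix

namespace IsCPMap

open Matrix
open scoped MatrixOrder

variable {n m : Type*} [Fintype n] [Fintype m] {Φ : Matrix n n ℂ → Matrix m m ℂ}

theorem posSemidef (hΦ : IsCPMap Φ) {X : Matrix n n ℂ} (hX : X.PosSemidef) :
    (Φ X).PosSemidef := by
  obtain ⟨r, K, hK⟩ := hΦ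
  rw [hK]
  exact posSemidef_sum _ fun i _ => hX.conjTranspose_mul_mul_same (K i)

theorem posSemidef_fromBlocks (hΦ : IsCPMap Φ) {X Y Z : Matrix n n ℂ}
    (h : (fromBlocks X Z Z Y).PosSemidef) :
    (fromBlocks (Φ X) (Φ Z) (Φ Z) (Φ Y)).PosSemidef := by
  obtain ⟨r, K, hK⟩ := hΦ
  have hsum : fromBlocks (Φ X) (Φ Z) (Φ Z) (Φ Y) =
      ∑ i, (fromBlocks (K i) 0 0 (K i))ᴴ * fromBlocks X Z Z Y * fromBlocks (K i) 0 0 (K i) := by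
    ext (i | i) (j | j) <;>
      simp [hK, fromBlocks_conjTranspose, fromBlocks_multiply, Matrix.sum_apply]
  rw [hsum]
  exact posSemidef_sum _ fun i _ => h.conjTranspose_mul_mul_same _

theorem posDef (hΦ : IsCPMap Φ) {A G : Matrix n n ℂ} (hΦA : (Φ A).PosDef) (hG : G.PosDef) :
    (Φ G).PosDef := by
  refine PosDef.of_dotProduct_mulVec_pos (hΦ.posSemidef hG.posSemidef).1 fun v hv => ?_
  obtain ⟨r, K, hK⟩ := hΦ
  have hquad : ∀ X, star v ⬝ᵥ Φ X *ᵥ v = ∑ i, star (K i *ᵥ v) ⬝ᵥ X *ᵥ (K i *ᵥ v) := by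
    intro X
    simp only [hK, sum_mulVec, dotProduct_sum, star_mulVec, dotProduct_mulVec, vecMul_vecMul]
  obtain ⟨i, hi⟩ : ∃ i, K i *ᵥ v ≠ 0 := by
    by_contra! h0
    simpa [hquad, h0] using hΦA.dotProduct_mulVec_pos hv
  rw [hquad]
  exact Finset.sum_pos' (fun j _ => hG.posSemidef.dotProduct_mulVec_nonneg _)
    ⟨i, Finset.mem_univ _, hG.dotProduct_mulVec_pos hi⟩

theorem continuous (hΦ : IsCPMap Φ) : Continuous Φ := by
  obtain ⟨r, K, hK⟩ := hΦ
  rw [funext hK]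
  fun_prop

variable [DecidableEq n] [DecidableEq m]

theorem map_geomMean_le (hΦ : IsCPMap Φ) {A B : Matrix n n ℂ} (hA : A.PosDef) (hB : B.PosDef)
    (hΦA : (Φ A).PosDef) (hΦB : (Φ B).PosDef) : Φ (geomMean A B) ≤ geomMean (Φ A) (Φ B) :=
  le_geomMean_of_posSemidef_fromBlocks hΦA hΦB (hΦ.posSemidef (hA.geomMean hB).posSemidef).1
    (hΦ.posSemidef_fromBlocks (posSemidef_fromBlocks_geomMean hA hB))

theorem map_wgeomMean_midpoint_le (hΦ : IsCPMap Φ) {A B : Matrix n n ℂ} (hA : A.PosDef)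
    (hB : B.PosDef) (hΦA : (Φ A).PosDef) (hΦB : (Φ B).PosDef) {β γ : ℝ}
    (hβ : Φ (wgeomMean β A B) ≤ wgeomMean β (Φ A) (Φ B))
    (hγ : Φ (wgeomMean γ A B) ≤ wgeomMean γ (Φ A) (Φ B)) :
    Φ (wgeomMean ((β + γ) / 2) A B) ≤ wgeomMean ((β + γ) / 2) (Φ A) (Φ B) := by
  rw [wgeomMean_midpoint hA hB, wgeomMean_midpoint hΦA hΦB]
  calc Φ (geomMean (wgeomMean β A B) (wgeomMean γ A B))
      ≤ geomMean (Φ (wgeomMean β A B)) (Φ (wgeomMean γ A B)) :=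
        hΦ.map_geomMean_le (hA.wgeomMean hB β) (hA.wgeomMean hB γ)
          (hΦ.posDef hΦA (hA.wgeomMean hB β)) (hΦ.posDef hΦA (hA.wgeomMean hB γ))
    _ ≤ geomMean (wgeomMean β (Φ A) (Φ B)) (wgeomMean γ (Φ A) (Φ B)) :=
        geomMean_mono (hΦ.posDef hΦA (hA.wgeomMean hB β)) (hΦ.posDef hΦA (hA.wgeomMean hB γ))
          hβ hγ

end IsCPMap

/-- `Φ(G_α(A,B)) ≤ G_α(Φ(A), Φ(B))` for a completely positive map `Φ` and `α ∈ [0,1]`. -/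
theorem cp_weighted_geomMean {n m : Type*} [Fintype n] [DecidableEq n] [Fintype m] [DecidableEq m]
    (Φ : Matrix n n ℂ → Matrix m m ℂ) (hΦ : IsCPMap Φ)
    (α : ℝ) (hα0 : 0 ≤ α) (hα1 : α ≤ 1)
    (A B : Matrix n n ℂ) (hA : A.PosDef) (hB : B.PosDef)
    (hΦA : (Φ A).PosDef) (hΦB : (Φ B).PosDef) :
    (wgeomMean α (Φ A) (Φ B) - Φ (wgeomMean α A B)).PosSemidef := by
  let S := {t : ℝ | (wgeomMean t (Φ A) (Φ B) - Φ (wgeomMean t A B)).PosSemidef}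
  have hclosed : IsClosed S := isClosed_setOf_posSemidef.preimage
    ((continuous_wgeomMean hΦA hΦB).sub (hΦ.continuous.comp (continuous_wgeomMean hA hB)))
  have h0 : 0 ∈ S := by
    simp [S, wgeomMean_zero hA.posSemidef hB, wgeomMean_zero hΦA.posSemidef hΦB, PosSemidef.zero]
  have h1 : 1 ∈ S := by
    simp [S, wgeomMean_one hA.posSemidef hB, wgeomMean_one hΦA.posSemidef hΦB, PosSemidef.zero]
  have hmid : ∀ β ∈ S, ∀ γ ∈ S, (β + γ) / 2 ∈ S := fun β hβ γ hγ =>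
    hΦ.map_wgeomMean_midpoint_le hA hB hΦA hΦB hβ hγ
  exact Set.Icc_subset_of_isClosed_of_midpoint_mem hclosed h0 h1 hmid ⟨hα0, hα1⟩
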